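/- Let D be a non-Hamiltonian 2-strong digraph of order n such that n−1 of its vertices have degree at least n+1 and the remaining vertex z has degree at most n−2. Suppose C = x_1 x_2 … x_m z x_1, with 2 ≤ m ≤ n−3, is a longest directed cycle through z in D, the set Y = V(D) \ V(C) contains two distinct vertices y_1, y_2 that are mutually reachable in D⟨Y⟩ with d(y_i, {x_1, …, x_m}) = m+1 for each i ∈ {1,2}, and l is an integer with 2 ≤ l ≤ m−1 such that every vertex of {x_l, …, x_m} dominates both y_1 and y_2 and both y_1 and y_2 dominate every vertex of {x_1, …, x_l}. Suppose further that a and b are indices with 1 ≤ a ≤ l−1 and l+1 ≤ b ≤ m such that x_a x_b is an arc of D. Then: (i) for every i with a+1 ≤ i ≤ l−1, x_i z is not an arc of D; (ii) for every j with l+1 ≤ j ≤ b−1, z x_j is not an arc of D; (iii) for every i with a+1 ≤ i ≤ l and i−a ≤ 3, z x_i is not an arc of D; (iv) for every j with l ≤ j ≤ b−1 and b−j ≤ 3, x_j z is not an arc of D. -/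

import Mathlib

/-! A digraph on a vertex type `V` is given by its arc relation `A : V → V → Prop`
(this automatically forbids multiple arcs); looplessness is expressed by the
hypothesis `Irreflexive A`. -/

/-- The degree of `x`: its out-degree plus its in-degree. -/
noncomputable def degree {V : Type*} (A : V → V → Prop) (x : V) : ℕ :=
  {y | A x y}.ncard + {y | A y x}.ncard

/-- `degreeIn A x S` is the number of arcs between `x` and vertices of `S`,
in both directions. -/
noncomputable def degreeIn {V : Type*} (A : V → V → Prop) (x : V) (S : Set V) : ℕ :=
  {y ∈ S | A x y}.ncard + {y ∈ S | A y x}.ncard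

/-- `c : Fin m → V` is a directed cycle of length `m` (indices taken mod `m`). -/
def IsCycle {V : Type*} (A : V → V → Prop) {m : ℕ} (c : Fin m → V) : Prop :=
  2 ≤ m ∧ Function.Injective c ∧
    ∀ i : Fin m, A (c i) (c ⟨(i.val + 1) % m, Nat.mod_lt _ i.pos⟩)

/-- `p : Fin m → V` is a directed path on `m` vertices (of length `m - 1`). -/
def IsPath {V : Type*} (A : V → V → Prop) {m : ℕ} (p : Fin m → V) : Prop :=
  Function.Injective p ∧ ∀ (i : Fin m) (h : i.val + 1 < m), A (p i) (p ⟨i.val + 1, h⟩)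

/-- A digraph is Hamiltonian if it has a directed cycle through all of its vertices. -/
def IsHamiltonian {V : Type*} [Fintype V] (A : V → V → Prop) : Prop :=
  ∃ c : Fin (Fintype.card V) → V, IsCycle A c ∧ Function.Surjective c

/-- Reachability by a directed path staying inside the set `S`. -/
def ReachIn {V : Type*} (A : V → V → Prop) (S : Set V) : V → V → Prop :=
  Relation.ReflTransGen (fun u v => u ∈ S ∧ v ∈ S ∧ A u v)

/-- A digraph is strong if every vertex is reachable from every other by a directed path. -/
def IsStrong {V : Type*} (A : V → V → Prop) : Prop :=
  ∀ x y : V, Relation.ReflTransGen A x y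

/-- A digraph is `k`-strong if it has at least `k + 1` vertices and the deletion of
any set of at most `k - 1` vertices leaves a strong digraph. -/
def IsKStrong {V : Type*} [Fintype V] (A : V → V → Prop) (k : ℕ) : Prop :=
  k + 1 ≤ Fintype.card V ∧
    ∀ S : Set V, S.ncard ≤ k - 1 → ∀ x ∈ Sᶜ, ∀ y ∈ Sᶜ, ReachIn A Sᶜ x y


/-! Every cycle through `z` has at most `m + 1` vertices. A vertex `y ∈ Y` entered from
`x_l, …, x_m` and leaving into `x_1, …, x_l` is not adjacent to `z`, since otherwise `y` could be
inserted into `C` next to `z`. So the at least `n + 1` arcs at `y₁` and at `y₂` consist of `m + 1`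
arcs to `C` and at least `n - m` arcs inside `Y`, a set of `n - m - 1` vertices; by pigeonhole
`Y` contains a path `y₁ w y₂` or `y₂ w y₁`. Each arc excluded by the claim, together with the
chord `x_a x_b`, would reroute `C` through a detour `y₁ … y₂` or through that path into a longer
cycle through `z`. -/

open Function

theorem isCycle_get_cons {V : Type*} {A : V → V → Prop} {s : V} {L : List V} (hL : L ≠ [])
    (hnd : (s :: L).Nodup) (hch : (s :: L ++ [s]).IsChain A) : IsCycle A (s :: L).get := by
  refine ⟨by simpa [Nat.one_le_iff_ne_zero] using hL, List.nodup_iff_injective_get.mp hnd,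
    fun i => ?_⟩
  have hi := List.isChain_iff_getElem.mp hch i (by simpa using i.isLt)
  rcases Nat.lt_or_ge (i.val + 1) (s :: L).length with h | h
  · simp only [List.get_eq_getElem, Nat.mod_eq_of_lt h]
    rwa [List.getElem_append_left, List.getElem_append_left h] at hi
  · have hlast : i.val + 1 = (s :: L).length := by omega
    simp only [List.get_eq_getElem, hlast, Nat.mod_self]
    rw [List.getElem_append_left i.isLt, List.getElem_append_right (by omega)] at hi
    simpa using hi

theorem isChain_Ico_append {R : ℕ → ℕ → Prop} {p q : ℕ} {l : List ℕ} (hpq : p < q)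
    (hstep : ∀ k, p ≤ k → k + 1 < q → R k (k + 1)) (hl : ((q - 1) :: l).IsChain R) :
    (List.Ico p q ++ l).IsChain R := by
  induction h : q - p generalizing p with
  | zero => omega
  | succ d ih =>
    rw [List.Ico.eq_cons hpq, List.cons_append]
    rcases Nat.lt_or_ge (p + 1) q with hp | hp
    · rw [List.Ico.eq_cons hp, List.cons_append, List.isChain_cons_cons, ← List.cons_append,
        ← List.Ico.eq_cons hp]
      exact ⟨hstep p le_rfl hp, ih hp (fun k hk => hstep k (by omega)) (by omega)⟩
    · rwa [List.Ico.eq_nil_of_le hp, List.nil_append, show p = q - 1 by omega]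

theorem isChain_cons_Ico_append {R : ℕ → ℕ → Prop} {s p q : ℕ} {l : List ℕ} (hpq : p < q)
    (hs : R s p) (hstep : ∀ k, p ≤ k → k + 1 < q → R k (k + 1))
    (hl : ((q - 1) :: l).IsChain R) : (s :: (List.Ico p q ++ l)).IsChain R := by
  have h := isChain_Ico_append hpq hstep hl
  rw [List.Ico.eq_cons hpq, List.cons_append] at h ⊢
  exact List.isChain_cons_cons.mpr ⟨hs, h⟩

section Degree

variable {V : Type*} (A : V → V → Prop)

theorem degreeIn_singleton_eq_zero {v z : V} (h₁ : ¬ A v z) (h₂ : ¬ A z v) :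
    degreeIn A v {z} = 0 := by
  rw [degreeIn, Set.sep_eq_empty_iff_mem_false.mpr, Set.sep_eq_empty_iff_mem_false.mpr,
    Set.ncard_empty]
  all_goals rintro y rfl; assumption

variable [Finite V]

theorem ncard_sep_add_ncard_sep_compl (P : V → Prop) (S : Set V) :
    {y | P y}.ncard = {y ∈ S | P y}.ncard + {y ∈ Sᶜ | P y}.ncard := by
  rw [← Set.ncard_union_eq (Set.disjoint_left.mpr fun y h h' => h'.1 h.1)]
  congr 1
  ext y
  by_cases hy : y ∈ S <;> simp [hy]

theorem degree_eq_degreeIn_add_degreeIn_compl (v : V) (S : Set V) :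
    degree A v = degreeIn A v S + degreeIn A v Sᶜ := by
  rw [degree, ncard_sep_add_ncard_sep_compl (A v) S,
    ncard_sep_add_ncard_sep_compl (fun y => A y v) S, degreeIn, degreeIn]
  ring

theorem degreeIn_union {v : V} {S T : Set V} (h : Disjoint S T) :
    degreeIn A v (S ∪ T) = degreeIn A v S + degreeIn A v T := by
  have hsep (P : V → Prop) : {y ∈ S ∪ T | P y} = {y ∈ S | P y} ∪ {y ∈ T | P y} :=
    Set.sep_union
  have hdisj (P : V → Prop) : Disjoint {y ∈ S | P y} {y ∈ T | P y} :=
    h.mono (fun _ hy => hy.1) (fun _ hy => hy.1)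
  simp only [degreeIn, hsep, Set.ncard_union_eq (hdisj _)]
  ring

theorem ncard_compl_lt_degreeIn_compl {v z : V} {S : Set V} (hz : z ∉ S)
    (h₁ : ¬ A v z) (h₂ : ¬ A z v) (hdeg : Nat.card V + 1 ≤ degree A v)
    (hS : degreeIn A v S = S.ncard + 1) : (S ∪ {z})ᶜ.ncard < degreeIn A v (S ∪ {z})ᶜ := by
  have hcard := Set.ncard_add_ncard_compl (S ∪ {z})
  rw [Set.ncard_union_eq (Set.disjoint_singleton_right.mpr hz), Set.ncard_singleton] at hcard
  rw [degree_eq_degreeIn_add_degreeIn_compl A v (S ∪ {z}),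
    degreeIn_union A (Set.disjoint_singleton_right.mpr hz),
    degreeIn_singleton_eq_zero A h₁ h₂] at hdeg
  omega

theorem ncard_sep_add_ncard_sep_le {Y : Set V} {u v : V} (h : ∀ w ∈ Y, ¬ (A u w ∧ A w v)) :
    {w ∈ Y | A u w}.ncard + {w ∈ Y | A w v}.ncard ≤ Y.ncard := by
  rw [← Set.ncard_union_eq (Set.disjoint_left.mpr fun w h₁ h₂ => h w h₁.1 ⟨h₁.2, h₂.2⟩)]
  exact Set.ncard_le_ncard (Set.union_subset (fun _ hw => hw.1) (fun _ hw => hw.1))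

theorem exists_path_two_of_ncard_lt {Y : Set V} {u v : V}
    (h : 2 * Y.ncard < degreeIn A u Y + degreeIn A v Y) :
    ∃ w ∈ Y, A u w ∧ A w v ∨ A v w ∧ A w u := by
  by_contra! hno
  have huv := ncard_sep_add_ncard_sep_le A fun w hw h => (hno w hw).1 h.1 h.2
  have hvu := ncard_sep_add_ncard_sep_le A fun w hw h => (hno w hw).2 h.1 h.2
  simp only [degreeIn] at h
  omega

end Degree

section LongestCycle

variable {V : Type*} {A : V → V → Prop} {m : ℕ} {x : Fin m → V} {z : V} {e : List V}

/-- Vertices are handled through natural-number labels: `k < m` names `x k`, `m` names `z` and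
`m + 1 + j` names `e[j]`, so that cycles become lists of labels and stretches of `C` become
`List.Ico` ranges. -/
def cycleLabel (x : Fin m → V) (z : V) (e : List V) (k : ℕ) : V :=
  if h : k < m then x ⟨k, h⟩ else (z :: e).getD (k - m) z

theorem cycleLabel_of_lt {k : ℕ} (h : k < m) : cycleLabel x z e k = x ⟨k, h⟩ :=
  dif_pos h

@[simp]
theorem cycleLabel_add (j : ℕ) : cycleLabel x z e (m + j) = (z :: e).getD j z := by
  simp [cycleLabel]

@[simp]
theorem cycleLabel_self : cycleLabel x z e m = z := by
  simp [cycleLabel]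

theorem injOn_cycleLabel (hx : Injective x) (he : (z :: e).Nodup)
    (hex : ∀ v ∈ z :: e, v ∉ Set.range x) :
    Set.InjOn (cycleLabel x z e) (Set.Iic (m + e.length)) := by
  have hoff (k : ℕ) (hk : m ≤ k) (hke : k ≤ m + e.length) :
      cycleLabel x z e k = (z :: e)[k - m]'(by rw [List.length_cons]; omega) := by
    obtain ⟨j, rfl⟩ : ∃ j, k = m + j := ⟨k - m, by omega⟩
    simp [List.getElem?_eq_getElem (show j < (z :: e).length by rw [List.length_cons]; omega)]
  intro i hi j hj hij
  simp only [Set.mem_Iic] at hi hj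
  rcases Nat.lt_or_ge i m with him | him <;> rcases Nat.lt_or_ge j m with hjm | hjm
  · rw [cycleLabel_of_lt him, cycleLabel_of_lt hjm] at hij
    simpa using hx hij
  · rw [cycleLabel_of_lt him, hoff j hjm hj] at hij
    exact (hex _ (List.getElem_mem _) ⟨_, hij⟩).elim
  · rw [cycleLabel_of_lt hjm, hoff i him hi] at hij
    exact (hex _ (List.getElem_mem _) ⟨_, hij.symm⟩).elim
  · rw [hoff i him hi, hoff j hjm hj, he.getElem_inj_iff] at hij
    omega

structure IsLongestCycleThrough (A : V → V → Prop) (x : Fin m → V) (z : V) : Prop where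
  pos : 0 < m
  injective : Injective x
  not_mem_range : z ∉ Set.range x
  arc_succ : ∀ (i : Fin m) (h : i.val + 1 < m), A (x i) (x ⟨i.val + 1, h⟩)
  arc_to : A (x ⟨m - 1, Nat.sub_one_lt_of_lt pos⟩) z
  arc_from : A z (x ⟨0, pos⟩)
  longest : ∀ (r : ℕ) (c : Fin r → V), IsCycle A c → z ∈ Set.range c → r ≤ m + 1

namespace IsLongestCycleThrough

variable (hC : IsLongestCycleThrough A x z)
include hC

theorem arc_label_succ {k : ℕ} (hk : k + 1 < m) :
    (A on cycleLabel x z e) k (k + 1) := by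
  simp only [onFun, cycleLabel_of_lt hk, cycleLabel_of_lt (Nat.lt_of_succ_lt hk)]
  exact hC.arc_succ ⟨k, _⟩ hk

theorem arc_label_to : (A on cycleLabel x z e) (m - 1) m := by
  simpa [onFun, cycleLabel_of_lt (Nat.sub_one_lt_of_lt hC.pos)] using hC.arc_to

theorem arc_label_from : (A on cycleLabel x z e) m 0 := by
  simpa [onFun, cycleLabel_of_lt hC.pos] using hC.arc_from

theorem length_le (he : (z :: e).Nodup) (hex : ∀ v ∈ e, v ∉ Set.range x) {s : ℕ} {L : List ℕ}
    (hbound : ∀ k ∈ s :: L, k ≤ m + e.length) (hnd : (s :: L).Nodup) (hz : m ∈ s :: L)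
    (hch : (s :: L ++ [s]).IsChain (A on cycleLabel x z e)) : L.length ≤ m := by
  rcases eq_or_ne L [] with rfl | hL
  · exact Nat.zero_le _
  have hinj :=
    injOn_cycleLabel hC.injective he (List.forall_mem_cons.mpr ⟨hC.not_mem_range, hex⟩)
  have hcyc : IsCycle A ((s :: L).map (cycleLabel x z e)).get := by
    refine isCycle_get_cons (by simpa using hL)
      (List.Nodup.map_on (fun i hi j hj => hinj (hbound i hi) (hbound j hj)) hnd) ?_
    simpa using (List.isChain_map (R := A) (cycleLabel x z e)).mpr hch
  have hzc : z ∈ Set.range ((s :: L).map (cycleLabel x z e)).get :=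
    List.mem_iff_get.mp (List.mem_map.mpr ⟨m, hz, cycleLabel_self⟩)
  simpa using hC.longest _ _ hcyc hzc

theorem not_arc_to_z {y : V} (he : [z, y].Nodup) (hy : y ∉ Set.range x)
    (hxy : A (x ⟨m - 1, Nat.sub_one_lt_of_lt hC.pos⟩) y) : ¬ A y z := by
  intro hyz
  have := hC.length_le (e := [y]) he (by simpa using hy) (s := m) (L := List.Ico 0 m ++ [m + 1])
    (by grind [List.Ico.mem, List.Ico.nodup])
    (by grind [List.Ico.mem, List.Ico.nodup])
    (by simp) ?_
  · simp only [List.length_append, List.length_cons, List.length_nil, List.Ico.length] at this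
    omega
  simp only [List.cons_append, List.append_assoc]
  refine isChain_cons_Ico_append hC.pos hC.arc_label_from (fun k _ hk => hC.arc_label_succ hk) ?_
  simp only [List.nil_append, List.isChain_cons_cons, List.IsChain.singleton, and_true, onFun,
    cycleLabel_add, cycleLabel_self, cycleLabel_of_lt (Nat.sub_one_lt_of_lt hC.pos)]
  exact ⟨hxy, hyz⟩

theorem not_arc_from_z {y : V} (he : [z, y].Nodup) (hy : y ∉ Set.range x)
    (hyx : A y (x ⟨0, hC.pos⟩)) : ¬ A z y := by
  intro hzy
  have := hC.length_le (e := [y]) he (by simpa using hy) (s := m) (L := (m + 1) :: List.Ico 0 m)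
    (by grind [List.Ico.mem, List.Ico.nodup])
    (by grind [List.Ico.mem, List.Ico.nodup]) (by simp) ?_
  · simp only [List.length_cons, List.Ico.length] at this
    omega
  simp only [List.cons_append, List.isChain_cons_cons]
  refine ⟨by simpa [onFun] using hzy, isChain_cons_Ico_append hC.pos ?_
    (fun k _ hk => hC.arc_label_succ hk) (by simpa using hC.arc_label_to)⟩
  simpa [onFun, cycleLabel_of_lt hC.pos] using hyx

/-- Reroutes `C` into the cycle `z x_0 … x_a x_b … x_{m-1} M x_{a+1} … x_t z` (0-based). -/
theorem add_length_lt_of_arc_to {a b t : Fin m} (hab : A (x a) (x b)) (hat : a < t)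
    (htb : t < b) (htz : A (x t) z) (he : (z :: e).Nodup) (hex : ∀ v ∈ e, v ∉ Set.range x)
    {M : List ℕ} (hMnd : M.Nodup)
    (hM : ∀ k ∈ M, t.val < k ∧ k < b.val ∨ m < k ∧ k ≤ m + e.length)
    (hMch : ((m - 1) :: M ++ [a.val + 1]).IsChain (A on cycleLabel x z e)) :
    t.val + M.length < b := by
  have hb := b.isLt
  have := hC.length_le he hex (s := a + 1)
    (L := List.Ico (a + 2) (t + 1) ++ m :: (List.Ico 0 (a + 1) ++ (List.Ico b m ++ M)))
    ?_ ?_ (by simp) ?_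
  · simp only [List.length_append, List.length_cons, List.Ico.length] at this
    omega
  · intro k hk
    simp only [List.mem_cons, List.mem_append, List.Ico.mem] at hk
    grind
  · simp only [List.nodup_cons, List.nodup_append, List.mem_cons, List.mem_append, List.Ico.mem,
      List.Ico.nodup, hMnd]
    grind
  · simp only [List.cons_append, List.append_assoc]
    rw [← List.cons_append, ← List.Ico.eq_cons (by omega)]
    refine isChain_Ico_append (by omega) (fun k _ hk => hC.arc_label_succ (by omega)) ?_
    rw [Nat.add_sub_cancel, List.isChain_cons_cons]
    refine ⟨by simpa [onFun, cycleLabel_of_lt t.isLt] using htz, ?_⟩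
    refine isChain_cons_Ico_append (by omega) hC.arc_label_from
      (fun k _ hk => hC.arc_label_succ (by omega)) ?_
    rw [Nat.add_sub_cancel]
    refine isChain_cons_Ico_append hb ?_ (fun k _ hk => hC.arc_label_succ hk) ?_
    · simpa [onFun, cycleLabel_of_lt a.isLt, cycleLabel_of_lt hb] using hab
    · simpa using hMch

/-- Reroutes `C` into the cycle `z x_t … x_{b-1} M x_0 … x_a x_b … x_{m-1} z` (0-based). -/
theorem add_length_lt_of_arc_from {a b t : Fin m} (hab : A (x a) (x b)) (hat : a < t)
    (htb : t < b) (hzt : A z (x t)) (he : (z :: e).Nodup) (hex : ∀ v ∈ e, v ∉ Set.range x)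
    {M : List ℕ} (hMnd : M.Nodup)
    (hM : ∀ k ∈ M, a.val < k ∧ k < t.val ∨ m < k ∧ k ≤ m + e.length)
    (hMch : ((b.val - 1) :: M ++ [0]).IsChain (A on cycleLabel x z e)) :
    a.val + M.length < t := by
  have hb := b.isLt
  have := hC.length_le he hex (s := 0)
    (L := List.Ico 1 (a + 1) ++ (List.Ico b m ++ m :: (List.Ico t b ++ M)))
    ?_ ?_ (by simp) ?_
  · simp only [List.length_append, List.length_cons, List.Ico.length] at this
    omega
  · intro k hk
    simp only [List.mem_cons, List.mem_append, List.Ico.mem] at hk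
    grind
  · simp only [List.nodup_cons, List.nodup_append, List.mem_cons, List.mem_append, List.Ico.mem,
      List.Ico.nodup, hMnd]
    grind
  · simp only [List.cons_append, List.append_assoc]
    rw [← List.cons_append, ← List.Ico.eq_cons (by omega)]
    refine isChain_Ico_append (by omega) (fun k _ hk => hC.arc_label_succ (by omega)) ?_
    rw [Nat.add_sub_cancel]
    refine isChain_cons_Ico_append hb ?_ (fun k _ hk => hC.arc_label_succ hk) ?_
    · simpa [onFun, cycleLabel_of_lt a.isLt, cycleLabel_of_lt hb] using hab
    rw [List.isChain_cons_cons]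
    refine ⟨hC.arc_label_to, isChain_cons_Ico_append htb ?_
      (fun k _ hk => hC.arc_label_succ (by omega)) (by simpa using hMch)⟩
    simpa [onFun, cycleLabel_of_lt t.isLt] using hzt

end IsLongestCycleThrough

/-- In the paper's 1-based indexing: `x_l, …, x_m → y → x_1, …, x_l`. -/
def IsBackBridge (A : V → V → Prop) (x : Fin m → V) (l : ℕ) (y : V) : Prop :=
  (∀ i : Fin m, l - 1 ≤ i.val → A (x i) y) ∧ ∀ i : Fin m, i.val ≤ l - 1 → A y (x i)

namespace IsBackBridge

variable {l : ℕ} {y : V} (hy : IsBackBridge A x l y)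
include hy

theorem arc_label_to {k j : ℕ} (hk : k < m) (hlk : l - 1 ≤ k) (hj : (z :: e).getD j z = y) :
    (A on cycleLabel x z e) k (m + j) := by
  rw [onFun, cycleLabel_of_lt hk, cycleLabel_add, hj]
  exact hy.1 ⟨k, hk⟩ hlk

theorem arc_label_from {k j : ℕ} (hk : k < m) (hkl : k ≤ l - 1) (hj : (z :: e).getD j z = y) :
    (A on cycleLabel x z e) (m + j) k := by
  rw [onFun, cycleLabel_of_lt hk, cycleLabel_add, hj]
  exact hy.2 ⟨k, hk⟩ hkl

end IsBackBridge

namespace IsLongestCycleThrough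

variable (hC : IsLongestCycleThrough A x z) {l : ℕ} {a b : Fin m}
include hC

theorem not_arc_to_z_of_two_bridges (hab : A (x a) (x b)) (hlb : l ≤ b.val) {y₁ y₂ : V}
    (he : [z, y₁, y₂].Nodup) (hex : ∀ v ∈ [y₁, y₂], v ∉ Set.range x)
    (hy₁ : IsBackBridge A x l y₁) (hy₂ : IsBackBridge A x l y₂)
    (i : Fin m) (hai : a < i) (hil : i.val + 2 ≤ l) : ¬ A (x i) z := by
  intro hiz
  have hb := b.isLt
  have := hC.add_length_lt_of_arc_to hab hai (by omega) hiz he hex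
    (M := (m + 1) :: (List.Ico (i + 1) b ++ [m + 2]))
    (by grind [List.Ico.mem, List.Ico.nodup])
    (by grind [List.Ico.mem, List.Ico.nodup]) ?_
  · simp only [List.length_append, List.length_cons, List.length_nil, List.Ico.length] at this
    omega
  simp only [List.cons_append, List.append_assoc, List.isChain_cons_cons]
  refine ⟨hy₁.arc_label_to (j := 1) (by omega) (by omega) rfl, ?_⟩
  refine isChain_cons_Ico_append (by omega) (hy₁.arc_label_from (by omega) (by omega) rfl)
    (fun k _ hk => hC.arc_label_succ (by omega)) ?_
  simp only [List.nil_append, List.isChain_cons_cons, List.IsChain.singleton, and_true]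
  exact ⟨hy₂.arc_label_to (j := 2) (by omega) (by omega) rfl,
    hy₂.arc_label_from (by omega) (by omega) rfl⟩

theorem not_arc_from_z_of_two_bridges (hab : A (x a) (x b)) (hal : a.val + 2 ≤ l) {y₁ y₂ : V}
    (he : [z, y₁, y₂].Nodup) (hex : ∀ v ∈ [y₁, y₂], v ∉ Set.range x)
    (hy₁ : IsBackBridge A x l y₁) (hy₂ : IsBackBridge A x l y₂)
    (j : Fin m) (hlj : l ≤ j.val) (hjb : j < b) : ¬ A z (x j) := by
  intro hzj
  have hb := b.isLt
  have := hC.add_length_lt_of_arc_from hab (by omega) hjb hzj he hex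
    (M := (m + 1) :: (List.Ico (a + 1) j ++ [m + 2]))
    (by grind [List.Ico.mem, List.Ico.nodup])
    (by grind [List.Ico.mem, List.Ico.nodup]) ?_
  · simp only [List.length_append, List.length_cons, List.length_nil, List.Ico.length] at this
    omega
  simp only [List.cons_append, List.append_assoc, List.isChain_cons_cons]
  refine ⟨hy₁.arc_label_to (j := 1) (by omega) (by omega) rfl, ?_⟩
  refine isChain_cons_Ico_append (by omega) (hy₁.arc_label_from (by omega) (by omega) rfl)
    (fun k _ hk => hC.arc_label_succ (by omega)) ?_
  simp only [List.nil_append, List.isChain_cons_cons, List.IsChain.singleton, and_true]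
  exact ⟨hy₂.arc_label_to (j := 2) (by omega) (by omega) rfl,
    hy₂.arc_label_from (by omega) (by omega) rfl⟩

theorem not_arc_from_z_of_path_two (hab : A (x a) (x b)) (hlb : l ≤ b.val) {u w v : V}
    (he : [z, u, w, v].Nodup) (hex : ∀ y ∈ [u, w, v], y ∉ Set.range x)
    (hu : IsBackBridge A x l u) (hv : IsBackBridge A x l v) (huw : A u w) (hwv : A w v)
    (i : Fin m) (hai : a < i) (hil : i.val + 1 ≤ l) (hia : i.val ≤ a.val + 3) :
    ¬ A z (x i) := by
  intro hzi
  have hb := b.isLt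
  have := hC.add_length_lt_of_arc_from hab hai (by omega) hzi he hex (M := [m + 1, m + 2, m + 3])
    (by simp) (by grind [List.Ico.mem, List.Ico.nodup]) ?_
  · simp only [List.length_cons, List.length_nil] at this
    omega
  simp only [List.cons_append, List.nil_append, List.isChain_cons_cons, List.IsChain.singleton,
    and_true]
  exact ⟨hu.arc_label_to (j := 1) (by omega) (by omega) rfl, by simpa [onFun] using huw,
    by simpa [onFun] using hwv, hv.arc_label_from (j := 3) (by omega) (by omega) rfl⟩

theorem not_arc_to_z_of_path_two (hab : A (x a) (x b)) (hal : a.val + 2 ≤ l) {u w v : V}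
    (he : [z, u, w, v].Nodup) (hex : ∀ y ∈ [u, w, v], y ∉ Set.range x)
    (hu : IsBackBridge A x l u) (hv : IsBackBridge A x l v) (huw : A u w) (hwv : A w v)
    (j : Fin m) (hlj : l ≤ j.val + 1) (hjb : j < b) (hbj : b.val ≤ j.val + 3) :
    ¬ A (x j) z := by
  intro hjz
  have hb := b.isLt
  have := hC.add_length_lt_of_arc_to hab (by omega) hjb hjz he hex (M := [m + 1, m + 2, m + 3])
    (by simp) (by grind [List.Ico.mem, List.Ico.nodup]) ?_
  · simp only [List.length_cons, List.length_nil] at this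
    omega
  simp only [List.cons_append, List.nil_append, List.isChain_cons_cons, List.IsChain.singleton,
    and_true]
  exact ⟨hu.arc_label_to (j := 1) (by omega) (by omega) rfl, by simpa [onFun] using huw,
    by simpa [onFun] using hwv, hv.arc_label_from (j := 3) (by omega) (by omega) rfl⟩

theorem not_arc_z_of_isBackBridge (hlm : l ≤ m) {y : V} (hyx : y ∉ Set.range x) (hyz : y ≠ z)
    (hy : IsBackBridge A x l y) : ¬ A y z ∧ ¬ A z y :=
  ⟨hC.not_arc_to_z (by simpa using hyz.symm) hyx (hy.1 _ (show l - 1 ≤ m - 1 by omega)),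
    hC.not_arc_from_z (by simpa using hyz.symm) hyx (hy.2 _ (Nat.zero_le _))⟩

theorem exists_bridge_path_two [Finite V] (hirr : ∀ v, ¬ A v v) (hlm : l ≤ m) {y₁ y₂ : V}
    (hy₁x : y₁ ∉ Set.range x) (hy₁z : y₁ ≠ z) (hy₂x : y₂ ∉ Set.range x) (hy₂z : y₂ ≠ z)
    (hne : y₁ ≠ y₂) (hy₁ : IsBackBridge A x l y₁) (hy₂ : IsBackBridge A x l y₂)
    (hdeg₁ : Nat.card V + 1 ≤ degree A y₁) (hdeg₂ : Nat.card V + 1 ≤ degree A y₂)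
    (hd₁ : degreeIn A y₁ (Set.range x) = m + 1) (hd₂ : degreeIn A y₂ (Set.range x) = m + 1) :
    ∃ u w v, [z, u, w, v].Nodup ∧ (∀ y ∈ [u, w, v], y ∉ Set.range x) ∧
      IsBackBridge A x l u ∧ IsBackBridge A x l v ∧ A u w ∧ A w v := by
  have hrange : (Set.range x).ncard = m := by
    rw [Set.ncard_range_of_injective hC.injective, Nat.card_eq_fintype_card, Fintype.card_fin]
  have hz₁ := hC.not_arc_z_of_isBackBridge hlm hy₁x hy₁z hy₁
  have hz₂ := hC.not_arc_z_of_isBackBridge hlm hy₂x hy₂z hy₂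
  have hlt₁ := ncard_compl_lt_degreeIn_compl A hC.not_mem_range hz₁.1 hz₁.2 hdeg₁
    (by rw [hrange, hd₁])
  have hlt₂ := ncard_compl_lt_degreeIn_compl A hC.not_mem_range hz₂.1 hz₂.2 hdeg₂
    (by rw [hrange, hd₂])
  obtain ⟨w, hw, h | h⟩ :=
    exists_path_two_of_ncard_lt A (Y := (Set.range x ∪ {z})ᶜ) (u := y₁) (v := y₂) (by omega)
  all_goals
    simp only [Set.mem_compl_iff, Set.mem_union, Set.mem_singleton_iff, not_or] at hw
    obtain ⟨hwx, hwz⟩ := hw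
    refine ⟨_, w, _, ?_, ?_, ‹_›, ‹_›, h.1, h.2⟩
    · have := hirr w
      simp only [List.nodup_cons, List.mem_cons, List.not_mem_nil]
      grind
    · simp only [List.mem_cons, List.not_mem_nil, or_false, forall_eq_or_imp, forall_eq]
      exact ⟨‹_›, hwx, ‹_›⟩

end IsLongestCycleThrough

end LongestCycle

/-- Indices are 0-based: the paper's `x_t` is `x ⟨t - 1, _⟩`. -/
theorem statement15 {V : Type*} [Fintype V] (A : V → V → Prop)
    (hirr : Irreflexive A)
    (n : ℕ) (hcard : Fintype.card V = n)
    (z : V)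
    (hdeg : ∀ v : V, v ≠ z → n + 1 ≤ degree A v)
    (m : ℕ) (hm2 : 2 ≤ m)
    -- the cycle C = x₁ x₂ … x_m z x₁ of length m + 1 through z
    (x : Fin m → V) (hxinj : Function.Injective x) (hzx : z ∉ Set.range x)
    (harc : ∀ (i : Fin m) (h : i.val + 1 < m), A (x i) (x ⟨i.val + 1, h⟩))
    (harcz1 : A (x ⟨m - 1, by omega⟩) z)
    (harcz2 : A z (x ⟨0, by omega⟩))
    -- C is a longest cycle through z
    (hlongest : ∀ (r : ℕ) (c : Fin r → V), IsCycle A c → z ∈ Set.range c → r ≤ m + 1)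
    (Y : Set V) (hY : Y = (Set.range x ∪ {z})ᶜ)
    (y₁ y₂ : V) (hy₁ : y₁ ∈ Y) (hy₂ : y₂ ∈ Y) (hyne : y₁ ≠ y₂)
    (hdy₁ : degreeIn A y₁ (Set.range x) = m + 1)
    (hdy₂ : degreeIn A y₂ (Set.range x) = m + 1)
    (l : ℕ) (hl2 : 2 ≤ l)
    (hdom₁ : ∀ i : Fin m, l - 1 ≤ i.val → A (x i) y₁ ∧ A (x i) y₂)
    (hdom₂ : ∀ i : Fin m, i.val ≤ l - 1 → A y₁ (x i) ∧ A y₂ (x i))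
    (a b : Fin m) (ha : a.val ≤ l - 2) (hb : l ≤ b.val)
    (hab : A (x a) (x b)) :
    (∀ i : Fin m, a.val + 1 ≤ i.val → i.val ≤ l - 2 → ¬ A (x i) z) ∧
    (∀ j : Fin m, l ≤ j.val → j.val + 1 ≤ b.val → ¬ A z (x j)) ∧
    (∀ i : Fin m, a.val + 1 ≤ i.val → i.val ≤ l - 1 → i.val - a.val ≤ 3 →
      ¬ A z (x i)) ∧
    (∀ j : Fin m, l - 1 ≤ j.val → j.val < b.val → b.val - j.val ≤ 3 →
      ¬ A (x j) z) := by
  subst hY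
  simp only [Set.mem_compl_iff, Set.mem_union, Set.mem_singleton_iff, not_or] at hy₁ hy₂
  have hC : IsLongestCycleThrough A x z :=
    ⟨by omega, hxinj, hzx, harc, harcz1, harcz2, hlongest⟩
  have hbr₁ : IsBackBridge A x l y₁ :=
    ⟨fun i hi => (hdom₁ i hi).1, fun i hi => (hdom₂ i hi).1⟩
  have hbr₂ : IsBackBridge A x l y₂ :=
    ⟨fun i hi => (hdom₁ i hi).2, fun i hi => (hdom₂ i hi).2⟩
  have hcardV : Nat.card V = n := by rw [Nat.card_eq_fintype_card, hcard]
  have he : [z, y₁, y₂].Nodup := by simp [Ne.symm hy₁.2, Ne.symm hy₂.2, hyne]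
  have hex : ∀ v ∈ [y₁, y₂], v ∉ Set.range x :=
    List.forall_mem_cons.mpr ⟨hy₁.1, List.forall_mem_singleton.mpr hy₂.1⟩
  obtain ⟨u, w, v, hpath, hpathx, hu, hv, huw, hwv⟩ :=
    hC.exists_bridge_path_two hirr (l := l) (by omega) hy₁.1 hy₁.2 hy₂.1 hy₂.2 hyne hbr₁ hbr₂
      (hcardV ▸ hdeg y₁ hy₁.2) (hcardV ▸ hdeg y₂ hy₂.2) hdy₁ hdy₂
  refine ⟨fun i hai hil => ?_, fun j hlj hjb => ?_, fun i hai hil hia => ?_,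
    fun j hlj hjb hbj => ?_⟩
  · exact hC.not_arc_to_z_of_two_bridges hab hb he hex hbr₁ hbr₂ i (by omega) (by omega)
  · exact hC.not_arc_from_z_of_two_bridges hab (by omega) he hex hbr₁ hbr₂ j hlj (by omega)
  · exact hC.not_arc_from_z_of_path_two hab hb hpath hpathx hu hv huw hwv i (by omega) (by omega)
      (by omega)
  · exact hC.not_arc_to_z_of_path_two hab (by omega) hpath hpathx hu hv huw hwv j (by omega) hjb
      (by omega)
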